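/- arXiv:2505.16247 — 5 statements merged into one kernel-verified Lean document; each statement's English description precedes it below -/
import Mathlib

section
/- Let B = conv{b_0,...,b_n} and C = conv{c_0,...,c_n} be two orthoschemes in R^n with b_0 = c_0 = 0 and |b_k| ≥ |c_k| for all k. Then the affine map f : R^n → R^n determined by f(b_k) = c_k satisfies |f(x)| ≤ |x| for every x ∈ B. -/
/-!
With `p 0 = 0`, orthogonality of `p k - p 0` to `p l - p k` gives `⟪p k, p l⟫ = ‖p k‖²` for
`k ≤ l`, so the Gram matrix of an orthoscheme is `(‖p (min k l)‖²)`. Hence the Gram matrix of `c`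
is entrywise at most that of `b`. A point of the simplex is `x = ∑ wᵢ bᵢ` with `wᵢ ≥ 0` and
`f x = ∑ wᵢ cᵢ`, and `‖∑ wᵢ pᵢ‖² = ∑ wᵢ wⱼ ⟪pᵢ, pⱼ⟫` is monotone in the Gram matrix.
-/

open scoped RealInnerProductSpace

/-- A simplex with vertices `p 0, ..., p n` is an *orthoscheme* if for every `k`,
the affine span of `p 0, ..., p k` is orthogonal to the affine span of
`p k, ..., p n`, i.e. all vectors `p i - p k` with `i ≤ k` are orthogonal to all
vectors `p j - p k` with `k ≤ j`. -/
def IsOrthoscheme {n : ℕ} (p : Fin (n + 1) → EuclideanSpace ℝ (Fin n)) : Prop :=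
  ∀ k i j : Fin (n + 1), i ≤ k → k ≤ j → ⟪p i - p k, p j - p k⟫ = 0

section GramMatrix

variable {ι E : Type*} [NormedAddCommGroup E] [InnerProductSpace ℝ E]

lemma norm_sum_smul_sq (s : Finset ι) (w : ι → ℝ) (p : ι → E) :
    ‖∑ i ∈ s, w i • p i‖ ^ 2 = ∑ i ∈ s, ∑ j ∈ s, w i * w j * ⟪p i, p j⟫ := by
  rw [← real_inner_self_eq_norm_sq, sum_inner]
  simp only [real_inner_smul_left, inner_sum, real_inner_smul_right]
  exact Finset.sum_congr rfl fun i _ => Finset.sum_congr rfl fun j _ => by ring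

lemma norm_sum_smul_le_of_inner_le {s : Finset ι} {w : ι → ℝ} (hw : ∀ i ∈ s, 0 ≤ w i)
    {p q : ι → E} (hpq : ∀ i j, ⟪p i, p j⟫ ≤ ⟪q i, q j⟫) :
    ‖∑ i ∈ s, w i • p i‖ ≤ ‖∑ i ∈ s, w i • q i‖ := by
  refine le_of_sq_le_sq ?_ (norm_nonneg _)
  rw [norm_sum_smul_sq, norm_sum_smul_sq]
  gcongr with i hi j hj
  · exact mul_nonneg (hw i hi) (hw j hj)
  · exact hpq i j

end GramMatrix

namespace IsOrthoscheme

variable {n : ℕ} {p q : Fin (n + 1) → EuclideanSpace ℝ (Fin n)}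

lemma inner_eq_norm_sq (hp : IsOrthoscheme p) (hp0 : p 0 = 0) {k l : Fin (n + 1)}
    (hkl : k ≤ l) : ⟪p k, p l⟫ = ‖p k‖ ^ 2 := by
  have h := hp k 0 l (Fin.zero_le k) hkl
  rw [hp0, zero_sub, inner_neg_left, inner_sub_right, neg_sub, sub_eq_zero] at h
  rw [← h, real_inner_self_eq_norm_sq]

lemma inner_le_inner (hp : IsOrthoscheme p) (hq : IsOrthoscheme q) (hp0 : p 0 = 0)
    (hq0 : q 0 = 0) (hnorm : ∀ k, ‖p k‖ ≤ ‖q k‖) (k l : Fin (n + 1)) :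
    ⟪p k, p l⟫ ≤ ⟪q k, q l⟫ := by
  wlog hkl : k ≤ l generalizing k l
  · rw [real_inner_comm (p l), real_inner_comm (q l)]
    exact this l k (le_of_not_ge hkl)
  rw [hp.inner_eq_norm_sq hp0 hkl, hq.inner_eq_norm_sq hq0 hkl]
  gcongr
  exact hnorm k

end IsOrthoscheme

theorem orthoscheme_affine_map_norm_nonincreasing_general (n : ℕ)
    (b c : Fin (n + 1) → EuclideanSpace ℝ (Fin n))
    (hB : IsOrthoscheme b) (hC : IsOrthoscheme c)
    (hb0 : b 0 = 0) (hc0 : c 0 = 0)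
    (hnorm : ∀ k, ‖c k‖ ≤ ‖b k‖)
    (f : EuclideanSpace ℝ (Fin n) →ᵃ[ℝ] EuclideanSpace ℝ (Fin n))
    (hf : ∀ k, f (b k) = c k) :
    ∀ x ∈ convexHull ℝ (Set.range b), ‖f x‖ ≤ ‖x‖ := by
  intro x hx
  rw [convexHull_range_eq_exists_affineCombination] at hx
  obtain ⟨s, w, hw0, hw1, rfl⟩ := hx
  have hfx : f (s.affineCombination ℝ b w) = s.affineCombination ℝ c w := by
    rw [Finset.map_affineCombination s b w hw1 f, show ⇑f ∘ b = c from funext hf]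
  rw [hfx, s.affineCombination_eq_linear_combination c w hw1,
    s.affineCombination_eq_linear_combination b w hw1]
  exact norm_sum_smul_le_of_inner_le hw0 (hC.inner_le_inner hB hc0 hb0 hnorm)

theorem orthoscheme_affine_map_norm_nonincreasing (n : ℕ)
    (b c : Fin (n + 1) → EuclideanSpace ℝ (Fin n))
    (hB : IsOrthoscheme b) (hC : IsOrthoscheme c)
    (hBnd : AffineIndependent ℝ b) (hCnd : AffineIndependent ℝ c)
    (hb0 : b 0 = 0) (hc0 : c 0 = 0)
    (hnorm : ∀ k, ‖c k‖ ≤ ‖b k‖)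
    (f : EuclideanSpace ℝ (Fin n) →ᵃ[ℝ] EuclideanSpace ℝ (Fin n))
    (hf : ∀ k, f (b k) = c k) :
    ∀ x ∈ convexHull ℝ (Set.range b), ‖f x‖ ≤ ‖x‖ :=
  orthoscheme_affine_map_norm_nonincreasing_general n b c hB hC hb0 hc0 hnorm f hf
end

section
/- Let B and C be orthoschemes in R^n with b_0 = c_0 = 0 and |b_k| ≥ |c_k| for all k. Then for any r > 0, vol(B)/vol(B ∩ B_0(r)) ≥ vol(C)/vol(C ∩ B_0(r)), where B_0(r) is the closed ball of radius r centered at the origin. -/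
/-!
Since `b` spans `ℝⁿ`, there is a linear map `f` with `f (b k) = c k`. It scales volume by
`|det f|`. For an orthoscheme with `p 0 = 0` one has `⟪p k, p l⟫ = ‖p (min k l)‖²`, so the squared
norm of a nonnegative combination `∑ wᵢ • pᵢ` is a nonnegative combination of the `‖p k‖²`;
hence `‖f x‖ ≤ ‖x‖` on `B`, and `f` maps `B ∩ B₀(r)` into `C ∩ B₀(r)` while mapping `B` onto `C`.
-/

open scoped RealInnerProductSpace
open MeasureTheory

theorem AffineIndependent.linearIndependent_comp_succ {K V : Type*} [Ring K] [AddCommGroup V]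
    [Module K V] {n : ℕ} {p : Fin (n + 1) → V} (hp : AffineIndependent K p) (hp0 : p 0 = 0) :
    LinearIndependent K (p ∘ Fin.succ) := by
  have hne : LinearIndependent K (fun i : {x : Fin (n + 1) // x ≠ 0} => p i) := by
    simpa [hp0] using (affineIndependent_iff_linearIndependent_vsub K p 0).mp hp
  exact hne.comp (fun i => ⟨i.succ, Fin.succ_ne_zero i⟩) fun i j hij => by
    simpa using congrArg Subtype.val hij

theorem exists_linearMap_apply_eq_of_affineIndependent {K V W : Type*} [Field K]
    [AddCommGroup V] [Module K V] [FiniteDimensional K V] [AddCommGroup W] [Module K W] {n : ℕ}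
    {p : Fin (n + 1) → V} (hp : AffineIndependent K p) (hp0 : p 0 = 0)
    (hV : Module.finrank K V = n) (q : Fin (n + 1) → W) (hq0 : q 0 = 0) :
    ∃ f : V →ₗ[K] W, ∀ k, f (p k) = q k := by
  let basis : Module.Basis (Fin n) K V :=
    basisOfLinearIndependentOfCardEqFinrank' _ (hp.linearIndependent_comp_succ hp0)
      (by simp [hV])
  refine ⟨basis.constr K (q ∘ Fin.succ), Fin.cases ?_ fun i => ?_⟩
  · simp [hp0, hq0]
  · simpa [basis] using basis.constr_basis K (q ∘ Fin.succ) i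

theorem MeasureTheory.Measure.addHaar_div_le_of_image_linearMap {E : Type*}
    [NormedAddCommGroup E] [NormedSpace ℝ E] [MeasurableSpace E] [BorelSpace E]
    [FiniteDimensional ℝ E] (μ : Measure E) [μ.IsAddHaarMeasure] (f : E →ₗ[ℝ] E)
    {s t u v : Set E} (hsu : f '' s = u) (htv : f '' t ⊆ v) :
    μ u / μ v ≤ μ s / μ t := by
  set d := ENNReal.ofReal |LinearMap.det f|
  have hu : μ u = d * μ s := hsu ▸ addHaar_image_linearMap μ f s
  have hv : d * μ t ≤ μ v := addHaar_image_linearMap μ f t ▸ measure_mono htv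
  rcases eq_or_ne d 0 with hd | hd
  · simp [hu, hd]
  calc μ u / μ v ≤ μ u / (d * μ t) := ENNReal.div_le_div_left hv _
    _ = μ s / μ t := by rw [hu, ENNReal.mul_div_mul_left _ _ hd ENNReal.ofReal_ne_top]

namespace IsOrthoscheme

variable {n : ℕ} {b c p : Fin (n + 1) → EuclideanSpace ℝ (Fin n)}

theorem inner_eq_norm_sq_min (hp : IsOrthoscheme p) (hp0 : p 0 = 0) (k l : Fin (n + 1)) :
    ⟪p k, p l⟫ = ‖p (min k l)‖ ^ 2 := by
  have inner_of_le : ∀ k l : Fin (n + 1), k ≤ l → ⟪p k, p l⟫ = ‖p k‖ ^ 2 := by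
    intro k l hkl
    have h := hp k 0 l (Fin.zero_le k) hkl
    rw [hp0, zero_sub, inner_neg_left, neg_eq_zero, inner_sub_right, sub_eq_zero] at h
    rw [h, real_inner_self_eq_norm_sq]
  rcases le_total k l with h | h
  · rw [min_eq_left h, inner_of_le k l h]
  · rw [min_eq_right h, real_inner_comm, inner_of_le l k h]

theorem norm_sum_smul_sq (hp : IsOrthoscheme p) (hp0 : p 0 = 0) (s : Finset (Fin (n + 1)))
    (w : Fin (n + 1) → ℝ) :
    ‖∑ i ∈ s, w i • p i‖ ^ 2 = ∑ i ∈ s, ∑ j ∈ s, w i * w j * ‖p (min i j)‖ ^ 2 := by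
  rw [← real_inner_self_eq_norm_sq, sum_inner]
  refine Finset.sum_congr rfl fun i _ => ?_
  rw [inner_sum]
  refine Finset.sum_congr rfl fun j _ => ?_
  rw [real_inner_smul_left, real_inner_smul_right, hp.inner_eq_norm_sq_min hp0, mul_assoc]

theorem norm_sum_smul_le (hB : IsOrthoscheme b) (hC : IsOrthoscheme c) (hb0 : b 0 = 0)
    (hc0 : c 0 = 0) (hnorm : ∀ k, ‖c k‖ ≤ ‖b k‖) {s : Finset (Fin (n + 1))}
    {w : Fin (n + 1) → ℝ} (hw : ∀ i ∈ s, 0 ≤ w i) :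
    ‖∑ i ∈ s, w i • c i‖ ≤ ‖∑ i ∈ s, w i • b i‖ := by
  rw [← sq_le_sq₀ (norm_nonneg _) (norm_nonneg _), hC.norm_sum_smul_sq hc0,
    hB.norm_sum_smul_sq hb0]
  gcongr with i hi j hj
  · exact mul_nonneg (hw i hi) (hw j hj)
  · exact hnorm _

theorem norm_map_le_of_mem_convexHull (hB : IsOrthoscheme b) (hC : IsOrthoscheme c)
    (hb0 : b 0 = 0) (hc0 : c 0 = 0) (hnorm : ∀ k, ‖c k‖ ≤ ‖b k‖)
    {f : EuclideanSpace ℝ (Fin n) →ₗ[ℝ] EuclideanSpace ℝ (Fin n)} (hf : ∀ k, f (b k) = c k)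
    {x : EuclideanSpace ℝ (Fin n)} (hx : x ∈ convexHull ℝ (Set.range b)) : ‖f x‖ ≤ ‖x‖ := by
  rw [convexHull_range_eq_exists_affineCombination] at hx
  obtain ⟨s, w, hw0, hw1, rfl⟩ := hx
  rw [Finset.affineCombination_eq_linear_combination _ _ _ hw1, map_sum]
  simp only [map_smul, hf]
  exact norm_sum_smul_le hB hC hb0 hc0 hnorm hw0

end IsOrthoscheme

theorem orthoscheme_volume_ratio_general (n : ℕ)
    (b c : Fin (n + 1) → EuclideanSpace ℝ (Fin n))
    (hB : IsOrthoscheme b) (hC : IsOrthoscheme c)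
    (hBnd : AffineIndependent ℝ b)
    (hb0 : b 0 = 0) (hc0 : c 0 = 0)
    (hnorm : ∀ k, ‖c k‖ ≤ ‖b k‖) (r : ℝ) :
    volume (convexHull ℝ (Set.range c)) /
        volume (convexHull ℝ (Set.range c) ∩ Metric.closedBall 0 r) ≤
      volume (convexHull ℝ (Set.range b)) /
        volume (convexHull ℝ (Set.range b) ∩ Metric.closedBall 0 r) := by
  obtain ⟨f, hf⟩ :=
    exists_linearMap_apply_eq_of_affineIndependent hBnd hb0 finrank_euclideanSpace_fin c hc0
  have himage : f '' convexHull ℝ (Set.range b) = convexHull ℝ (Set.range c) := by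
    rw [f.image_convexHull, ← Set.range_comp, show ⇑f ∘ b = c from funext hf]
  refine volume.addHaar_div_le_of_image_linearMap f himage ?_
  rintro _ ⟨x, ⟨hxB, hxr⟩, rfl⟩
  refine ⟨himage ▸ Set.mem_image_of_mem f hxB, mem_closedBall_zero_iff.2 ?_⟩
  exact (hB.norm_map_le_of_mem_convexHull hC hb0 hc0 hnorm hf hxB).trans
    (mem_closedBall_zero_iff.1 hxr)

theorem orthoscheme_volume_ratio (n : ℕ)
    (b c : Fin (n + 1) → EuclideanSpace ℝ (Fin n))
    (hB : IsOrthoscheme b) (hC : IsOrthoscheme c)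
    (hBnd : AffineIndependent ℝ b) (hCnd : AffineIndependent ℝ c)
    (hb0 : b 0 = 0) (hc0 : c 0 = 0)
    (hnorm : ∀ k, ‖c k‖ ≤ ‖b k‖) (r : ℝ) (hr : 0 < r) :
    volume (convexHull ℝ (Set.range c)) /
        volume (convexHull ℝ (Set.range c) ∩ Metric.closedBall 0 r) ≤
      volume (convexHull ℝ (Set.range b)) /
        volume (convexHull ℝ (Set.range b) ∩ Metric.closedBall 0 r) :=
  orthoscheme_volume_ratio_general n b c hB hC hBnd hb0 hc0 hnorm r
end

section
/- Let C ⊂ R^n be the simplex with vertices c_0 = 0 and c_k = (1,...,1,0,...,0) (k ones followed by n-k zeros) for k = 1,...,n. Then vol(C ∩ B_0(1))/vol(C) = vol(B_0(1))/2^n, where B_0(1) is the unit ball centered at the origin. -/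
/-!
The signed permutations of coordinates are linear isometries of `ℝⁿ`, so they preserve volume,
the unit ball and the cube `[-1,1]ⁿ`. Up to the null set of the walls `xᵢ = 0`, `xᵢ = ±xⱼ`, each
point is carried into the chamber `x₀ ≥ x₁ ≥ ⋯ ≥ xₙ₋₁ ≥ 0` by exactly one of them (sort `|x|`
decreasingly, then fix the signs). Hence every invariant set `A` has
`vol A = 2ⁿ n! · vol (A ∩ chamber)`. The simplex is the chamber cut by the cube, and the ball lies
in the cube, so applying this to the ball and to the cube gives the claim after cancelling `2ⁿ n!`.
-/

open MeasureTheory Set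

lemma ite_neg_eq_abs_iff {a : ℝ} (ha : a ≠ 0) (b : Bool) :
    (if b then -a else a) = |a| ↔ b = decide (a < 0) := by
  cases b
  · simp [eq_comm (a := a)]
  · simp [eq_comm (a := -a), ha.le_iff_lt]

theorem MeasureTheory.measure_eq_card_mul_measure_inter {α ι : Type*} [MeasurableSpace α]
    [Fintype ι] {μ : Measure α} {T : ι → α → α} (hT : ∀ i, MeasurePreserving (T i) μ μ)
    {D A : Set α} (hD : MeasurableSet D) (hA : MeasurableSet A)
    (hcover : ∀ᵐ x ∂μ, ∃ i, T i x ∈ D)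
    (hdisj : Pairwise fun i j => AEDisjoint μ (T i ⁻¹' D) (T j ⁻¹' D)) (hinv : ∀ i, T i ⁻¹' A = A) :
    μ A = Fintype.card ι * μ (A ∩ D) := by
  have hpiece : ∀ i, μ (A ∩ T i ⁻¹' D) = μ (A ∩ D) := fun i => by
    rw [← (hT i).measure_preimage (hA.inter hD).nullMeasurableSet, preimage_inter, hinv]
  have hconull : μ (⋃ i, T i ⁻¹' D)ᶜ = 0 :=
    compl_mem_ae_iff.1 <| by
      rw [compl_compl]; filter_upwards [hcover] with x ⟨i, hi⟩ using mem_iUnion.2 ⟨i, hi⟩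
  calc μ A = μ (⋃ i, A ∩ T i ⁻¹' D) := by rw [← inter_iUnion, measure_inter_conull hconull]
    _ = ∑ i, μ (A ∩ T i ⁻¹' D) := by
      rw [measure_iUnion₀ (fun i j hij => (hdisj hij).mono inter_subset_right inter_subset_right)
        fun i => (hA.inter ((hT i).measurable hD)).nullMeasurableSet, tsum_fintype]
    _ = Fintype.card ι * μ (A ∩ D) := by
      simp only [hpiece, Finset.sum_const, Finset.card_univ, nsmul_eq_mul]

theorem MeasureTheory.Measure.addHaar_ker_eq_zero {E : Type*} [NormedAddCommGroup E]
    [NormedSpace ℝ E] [MeasurableSpace E] [BorelSpace E] [FiniteDimensional ℝ E] (μ : Measure E)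
    [μ.IsAddHaarMeasure] {f : E →ₗ[ℝ] ℝ} (hf : f ≠ 0) : μ (LinearMap.ker f) = 0 :=
  Measure.addHaar_submodule μ _ (mt LinearMap.ker_eq_top.1 hf)

namespace Orthoscheme

variable {n : ℕ}

noncomputable def signedPerm (p : Equiv.Perm (Fin n) × (Fin n → Bool)) :
    EuclideanSpace ℝ (Fin n) ≃ₗᵢ[ℝ] EuclideanSpace ℝ (Fin n) :=
  (LinearIsometryEquiv.piLpCongrLeft 2 ℝ ℝ p.1.symm).trans
    (LinearIsometryEquiv.piLpCongrRight 2 fun i =>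
      if p.2 i then LinearIsometryEquiv.neg ℝ else LinearIsometryEquiv.refl ℝ ℝ)

lemma signedPerm_apply (p : Equiv.Perm (Fin n) × (Fin n → Bool)) (x : EuclideanSpace ℝ (Fin n))
    (i : Fin n) : signedPerm p x i = if p.2 i then -x (p.1 i) else x (p.1 i) := by
  by_cases h : p.2 i <;> simp [signedPerm, h, Equiv.piCongrLeft']

lemma abs_signedPerm_apply (p : Equiv.Perm (Fin n) × (Fin n → Bool))
    (x : EuclideanSpace ℝ (Fin n)) (i : Fin n) : |signedPerm p x i| = |x (p.1 i)| := by
  rw [signedPerm_apply]; split_ifs <;> simp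

def chamber (n : ℕ) : Set (EuclideanSpace ℝ (Fin n)) :=
  {x | (∀ i j, i ≤ j → x j ≤ x i) ∧ ∀ i, 0 ≤ x i}

def cube (n : ℕ) : Set (EuclideanSpace ℝ (Fin n)) := {x | ∀ i, |x i| ≤ 1}

def walls (n : ℕ) : Set (EuclideanSpace ℝ (Fin n)) :=
  {x | (∃ i, x i = 0) ∨ ∃ i j, i ≠ j ∧ |x i| = |x j|}

lemma isClosed_chamber : IsClosed (chamber n) := by
  simp only [chamber, ofPred_and, ofPred_forall]
  exact (isClosed_iInter fun i => isClosed_iInter fun j => isClosed_iInter fun _ =>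
    isClosed_le (by fun_prop) (by fun_prop)).inter
    (isClosed_iInter fun i => isClosed_le (by fun_prop) (by fun_prop))

lemma isClosed_cube : IsClosed (cube n) := by
  simp only [cube, ofPred_forall]
  exact isClosed_iInter fun i => isClosed_le (by fun_prop) (by fun_prop)

lemma convex_chamber : Convex ℝ (chamber n) := by
  rintro x ⟨hx, hx₀⟩ y ⟨hy, hy₀⟩ a b ha hb -
  simp only [chamber, mem_ofPred_eq, PiLp.add_apply, PiLp.smul_apply, smul_eq_mul]
  refine ⟨fun i j hij => ?_, fun i => ?_⟩
  · gcongr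
    exacts [hx i j hij, hy i j hij]
  · have := hx₀ i; have := hy₀ i; positivity

lemma convex_cube : Convex ℝ (cube n) := by
  rintro x hx y hy a b ha hb hab i
  simp only [PiLp.add_apply, PiLp.smul_apply, smul_eq_mul]
  calc |a * x i + b * y i| ≤ a * |x i| + b * |y i| := by
        simpa [abs_mul, abs_of_nonneg ha, abs_of_nonneg hb] using abs_add_le (a * x i) (b * y i)
    _ ≤ a * 1 + b * 1 := by gcongr; exacts [hx i, hy i]
    _ = 1 := by rw [mul_one, mul_one, hab]

lemma closedBall_subset_cube : Metric.closedBall 0 1 ⊆ cube n := fun x hx i =>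
  (PiLp.norm_apply_le x i).trans (mem_closedBall_zero_iff.1 hx)

lemma volume_cube : volume (cube n) = 2 ^ n := by
  have : cube n = (MeasurableEquiv.toLp 2 (Fin n → ℝ)).symm ⁻¹' univ.pi fun _ => Icc (-1) 1 := by
    ext x
    simp only [cube, mem_ofPred_eq, mem_preimage, mem_univ_pi, mem_Icc, abs_le,
      MeasurableEquiv.coe_toLp_symm]
  rw [this, (EuclideanSpace.volume_preserving_symm_measurableEquiv_toLp _).measure_preimage
    (MeasurableSet.univ_pi fun _ => measurableSet_Icc).nullMeasurableSet, volume_pi_pi]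
  norm_num [Real.volume_Icc]

lemma signedPerm_preimage_cube (p : Equiv.Perm (Fin n) × (Fin n → Bool)) :
    signedPerm p ⁻¹' cube n = cube n := by
  ext x
  simp only [cube, mem_preimage, mem_ofPred_eq, abs_signedPerm_apply]
  exact p.1.forall_congr_right (q := fun i => |x i| ≤ 1)

lemma signedPerm_preimage_closedBall (p : Equiv.Perm (Fin n) × (Fin n → Bool)) :
    signedPerm p ⁻¹' Metric.closedBall 0 1 = Metric.closedBall 0 1 := by
  simp

lemma signedPerm_apply_eq_abs {p : Equiv.Perm (Fin n) × (Fin n → Bool)}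
    {x : EuclideanSpace ℝ (Fin n)} (hp : signedPerm p x ∈ chamber n) (i : Fin n) :
    signedPerm p x i = |x (p.1 i)| := by
  rw [← abs_signedPerm_apply, abs_of_nonneg (hp.2 i)]

noncomputable def chamberIndex (x : EuclideanSpace ℝ (Fin n)) :
    Equiv.Perm (Fin n) × (Fin n → Bool) :=
  (Tuple.sort fun i => -|x i|, fun i => decide (x ((Tuple.sort fun i => -|x i|) i) < 0))

lemma signedPerm_chamberIndex_mem_chamber (x : EuclideanSpace ℝ (Fin n)) :
    signedPerm (chamberIndex x) x ∈ chamber n := by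
  set σ := Tuple.sort fun i => -|x i|
  have habs : ∀ i, signedPerm (chamberIndex x) x i = |x (σ i)| := fun i => by
    rw [signedPerm_apply]
    by_cases h : x (σ i) < 0
    · simp [chamberIndex, σ, h, abs_of_neg h]
    · simp [chamberIndex, σ, h, abs_of_nonneg (not_lt.1 h)]
  refine ⟨fun i j hij => ?_, fun i => habs i ▸ abs_nonneg _⟩
  rw [habs, habs]
  exact neg_le_neg_iff.1 (Tuple.monotone_sort (fun i => -|x i|) hij)

lemma eq_chamberIndex {p : Equiv.Perm (Fin n) × (Fin n → Bool)} {x : EuclideanSpace ℝ (Fin n)}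
    (hx : x ∉ walls n) (hp : signedPerm p x ∈ chamber n) : p = chamberIndex x := by
  have hinj : ∀ i j, |x i| = |x j| → i = j := fun i j h =>
    by_contra fun hij => hx (Or.inr ⟨i, j, hij, h⟩)
  have hσ : p.1 = Tuple.sort fun i => -|x i| := by
    refine Tuple.eq_sort_iff.2 ⟨fun i j hij => ?_, fun i j hij h => ?_⟩
    · have := hp.1 i j hij
      rw [signedPerm_apply_eq_abs hp, signedPerm_apply_eq_abs hp] at this
      exact neg_le_neg this
    · exact absurd (p.1.injective (hinj _ _ (neg_inj.1 h))) hij.ne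
  refine Prod.ext hσ (funext fun i => ?_)
  have h := signedPerm_apply_eq_abs hp i
  rw [signedPerm_apply, ite_neg_eq_abs_iff (fun h => hx (Or.inl ⟨_, h⟩))] at h
  rw [h, hσ]
  rfl

lemma volume_walls : volume (walls n) = 0 := by
  let π (i : Fin n) : EuclideanSpace ℝ (Fin n) →ₗ[ℝ] ℝ := (EuclideanSpace.proj i : StrongDual ℝ _)
  have hnull {f : EuclideanSpace ℝ (Fin n) →ₗ[ℝ] ℝ} (i : Fin n)
      (hf : f (EuclideanSpace.single i 1) ≠ 0) :
      volume (LinearMap.ker f : Set (EuclideanSpace ℝ (Fin n))) = 0 :=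
    Measure.addHaar_ker_eq_zero (f := f) _ fun h => hf (by rw [h, LinearMap.zero_apply])
  have hsub : walls n ⊆ (⋃ i, LinearMap.ker (π i)) ∪
      ⋃ i, ⋃ j, ⋃ (_ : i ≠ j), LinearMap.ker (π i - π j) ∪ LinearMap.ker (π i + π j) := by
    rintro x (⟨i, hi⟩ | ⟨i, j, hij, h⟩)
    · exact Or.inl (mem_iUnion.2 ⟨i, by simpa [π] using hi⟩)
    · refine Or.inr (mem_iUnion₂.2 ⟨i, j, mem_iUnion.2 ⟨hij, ?_⟩⟩)
      rcases abs_eq_abs.1 h with h | h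
      · exact Or.inl (by simp [π, h])
      · exact Or.inr (by simp [π, h])
  refine measure_mono_null hsub (measure_union_null
    (measure_iUnion_null fun i => hnull i (by simp [π]))
    (measure_iUnion_null fun i => measure_iUnion_null fun j => measure_iUnion_null fun hij =>
      measure_union_null (hnull i (by simp [π, hij])) (hnull i (by simp [π, hij]))))

section vertices

variable {c : Fin (n + 1) → EuclideanSpace ℝ (Fin n)}
  (hc : ∀ k : Fin (n + 1), ∀ i : Fin n, c k i = if (i : ℕ) < (k : ℕ) then 1 else 0)
include hc

lemma convexHull_subset_chamber_inter_cube : convexHull ℝ (range c) ⊆ chamber n ∩ cube n := by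
  refine convexHull_min
    (range_subset_iff.2 fun k => ⟨⟨fun i j hij => ?_, fun i => ?_⟩, fun i => ?_⟩)
    (convex_chamber.inter convex_cube)
  · rw [hc, hc]
    have : (i : ℕ) ≤ j := hij
    split_ifs <;> first | omega | norm_num
  all_goals rw [hc]; split_ifs <;> norm_num

lemma chamber_inter_cube_subset_convexHull : chamber n ∩ cube n ⊆ convexHull ℝ (range c) := by
  rintro x ⟨hx, hx₁⟩
  let a : ℕ → ℝ
    | 0 => 1
    | m + 1 => if h : m < n then x ⟨m, h⟩ else 0
  have ha : Antitone a := antitone_nat_of_succ_le fun m => by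
    rcases m with _ | m
    · dsimp only [a]
      split_ifs
      exacts [(abs_le.1 (hx₁ _)).2, zero_le_one]
    · dsimp only [a]
      split_ifs with h₁ h₀ h₀
      · exact hx.1 _ _ (Fin.mk_le_mk.2 m.le_succ)
      · omega
      · exact hx.2 _
      · exact le_rfl
  have hsum : ∑ k : Fin (n + 1), (a k - a (k + 1)) = 1 := by
    rw [Fin.sum_univ_eq_sum_range (fun k => a k - a (k + 1)), Finset.sum_range_sub']
    simp [a]
  have hx_eq : x = ∑ k : Fin (n + 1), (a k - a (k + 1)) • c k := by
    ext i
    simp only [WithLp.ofLp_sum, WithLp.ofLp_smul, Finset.sum_apply, Pi.smul_apply, hc,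
      smul_eq_mul, mul_ite, mul_one, mul_zero]
    rw [Fin.sum_univ_eq_sum_range (fun k => if (i : ℕ) < k then a k - a (k + 1) else 0),
      ← Finset.sum_filter,
      show (Finset.range (n + 1)).filter ((i : ℕ) < ·) = Finset.Ico ((i : ℕ) + 1) (n + 1) by
        ext; simp; omega,
      Finset.sum_congr rfl fun k _ => (neg_sub (a (k + 1)) (a k)).symm, Finset.sum_neg_distrib,
      Finset.sum_Ico_sub a (by omega)]
    simp [a]
  rw [hx_eq]
  exact (convex_convexHull ℝ _).sum_mem (fun k _ => sub_nonneg.2 (ha (Nat.le_succ _))) hsum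
    fun k _ => subset_convexHull ℝ _ (mem_range_self k)

lemma convexHull_eq_chamber_inter_cube : convexHull ℝ (range c) = chamber n ∩ cube n :=
  (convexHull_subset_chamber_inter_cube hc).antisymm (chamber_inter_cube_subset_convexHull hc)

end vertices

lemma volume_eq_card_mul_volume_inter_chamber {A : Set (EuclideanSpace ℝ (Fin n))}
    (hA : MeasurableSet A) (hinv : ∀ p, signedPerm p ⁻¹' A = A) :
    volume A = Fintype.card (Equiv.Perm (Fin n) × (Fin n → Bool)) * volume (A ∩ chamber n) :=
  measure_eq_card_mul_measure_inter (fun p => (signedPerm p).measurePreserving)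
    isClosed_chamber.measurableSet hA
    (.of_forall fun x => ⟨_, signedPerm_chamberIndex_mem_chamber x⟩)
    (fun _ _ hpq => measure_mono_null (fun _ ⟨hp, hq⟩ => by_contra fun hx =>
      hpq ((eq_chamberIndex hx hp).trans (eq_chamberIndex hx hq).symm)) volume_walls)
    hinv

end Orthoscheme

theorem standard_orthoscheme_ball_fraction (n : ℕ)
    (c : Fin (n + 1) → EuclideanSpace ℝ (Fin n))
    (hc : ∀ k : Fin (n + 1), ∀ i : Fin n,
      c k i = if (i : ℕ) < (k : ℕ) then 1 else 0) :
    volume (convexHull ℝ (Set.range c) ∩ Metric.closedBall 0 1) /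
        volume (convexHull ℝ (Set.range c)) =
      volume (Metric.closedBall (0 : EuclideanSpace ℝ (Fin n)) 1) / 2 ^ n := by
  have hball := Orthoscheme.volume_eq_card_mul_volume_inter_chamber (n := n)
    Metric.isClosed_closedBall.measurableSet Orthoscheme.signedPerm_preimage_closedBall
  have hcube := Orthoscheme.volume_eq_card_mul_volume_inter_chamber (n := n)
    Orthoscheme.isClosed_cube.measurableSet Orthoscheme.signedPerm_preimage_cube
  rw [Orthoscheme.volume_cube] at hcube
  rw [Orthoscheme.convexHull_eq_chamber_inter_cube hc, inter_assoc,
    inter_eq_right.2 Orthoscheme.closedBall_subset_cube, hball, hcube, inter_comm,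
    inter_comm (Orthoscheme.chamber n),
    ENNReal.mul_div_mul_left _ _ (by simp [Fintype.card_ne_zero]) (ENNReal.natCast_ne_top _)]
end

section
/- Let L ⊆ R^N be an n-dimensional linear subspace and let P = [-1,1]^N ∩ L, a polytope in L containing 0 in its relative interior. Then for every face F of P of codimension k (within L), the distance from 0 to the affine span of F is at least √k. -/
/-!
Pick a point `z` of the face `F` lying in its relative interior with respect to the coordinate
constraints: every coordinate of `z` is either in `(-1, 1)` or constant (hence `±1`) on `F`. Let
`S` be the set of coordinates of the second kind. They stay `±1` on the affine span of `F`, so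
every point of it has norm at least `√|S|`. Conversely, if `w ∈ L` vanishes on `S`, then
`z ± t w` lies in `P` for small `t > 0`; as `F` is a face, `z + t w ∈ F`, so `w` lies in the
direction of the affine span. Hence `n ≤ dim (affineSpan F) + |S|`, which is the claim.
-/

open Module Set Filter Topology Metric

theorem abs_midpoint_lt_one {a b : ℝ} (ha : |a| ≤ 1) (hb : |b| ≤ 1) (hab : |a| < 1 ∨ a ≠ b) :
    |midpoint ℝ a b| < 1 := by
  rw [midpoint_eq_smul_add, smul_eq_mul, invOf_eq_inv, abs_lt]
  rw [abs_le] at ha hb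
  rcases hab with hab | hab
  · rw [abs_lt] at hab; constructor <;> linarith
  · constructor <;> by_contra h <;> exact hab (by linarith)

theorem Submodule.finrank_le_finrank_inf_ker_add {K V W : Type*} [DivisionRing K]
    [AddCommGroup V] [Module K V] [AddCommGroup W] [Module K W] [FiniteDimensional K V]
    [FiniteDimensional K W] (U : Submodule K V) (φ : V →ₗ[K] W) :
    finrank K U ≤ finrank K (U ⊓ LinearMap.ker φ : Submodule K V) + finrank K W := by
  have h₁ := Submodule.finrank_sup_add_finrank_inf_eq U (LinearMap.ker φ)
  have h₂ := Submodule.finrank_le (U ⊔ LinearMap.ker φ)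
  have h₃ := LinearMap.finrank_range_add_finrank_ker φ
  have h₄ := Submodule.finrank_le (LinearMap.range φ)
  omega

def cube (ι : Type*) : Set (EuclideanSpace ℝ ι) := {x | ∀ i, |x i| ≤ 1}

section Cube

variable {ι : Type*}

theorem convex_cube : Convex ℝ (cube ι) := by
  have : cube ι = ⋂ i, (EuclideanSpace.proj (𝕜 := ℝ) i).toLinearMap ⁻¹' closedBall 0 1 := by
    ext x; simp [cube]
  rw [this]
  exact convex_iInter fun i => (convex_closedBall 0 1).linear_preimage _

theorem EuclideanSpace.midpoint_apply (x y : EuclideanSpace ℝ ι) (i : ι) :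
    midpoint ℝ x y i = midpoint ℝ (x i) (y i) := by
  simp [midpoint_eq_smul_add, mul_add]

theorem EuclideanSpace.apply_eq_of_mem_affineSpan {s : Set (EuclideanSpace ℝ ι)} {i : ι}
    {c : ℝ} (hs : ∀ x ∈ s, x i = c) {x : EuclideanSpace ℝ ι} (hx : x ∈ affineSpan ℝ s) :
    x i = c :=
  AffineMap.eqOn_affineSpan
    (f := (EuclideanSpace.proj (𝕜 := ℝ) i).toLinearMap.toAffineMap)
    (g := AffineMap.const ℝ _ c) hs hx

theorem sqrt_card_le_norm [Fintype ι] {x : EuclideanSpace ℝ ι} (S : Finset ι)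
    (h : ∀ i ∈ S, 1 ≤ |x i|) : √(S.card : ℝ) ≤ ‖x‖ := by
  rw [EuclideanSpace.norm_eq]
  gcongr
  calc (S.card : ℝ) = ∑ i ∈ S, 1 := by simp
    _ ≤ ∑ i ∈ S, ‖x i‖ ^ 2 := Finset.sum_le_sum fun i hi => by
        rw [Real.norm_eq_abs]; nlinarith [h i hi]
    _ ≤ ∑ i, ‖x i‖ ^ 2 := Finset.sum_le_univ_sum_of_nonneg fun i => by positivity

theorem eventually_add_smul_mem_cube [Finite ι] {z w : EuclideanSpace ℝ ι} (hz : z ∈ cube ι)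
    (hzw : ∀ i, |z i| < 1 ∨ w i = 0) : ∀ᶠ t in 𝓝 (0 : ℝ), z + t • w ∈ cube ι := by
  refine eventually_all.2 fun i => ?_
  rcases hzw i with h | h
  · have hc : Continuous fun t : ℝ => |z i + t * w i| := by fun_prop
    filter_upwards [hc.tendsto 0 |>.eventually (gt_mem_nhds (by simpa using h))] with t ht
    simpa using ht.le
  · exact Eventually.of_forall fun t => by simpa [h] using hz i

theorem Convex.exists_mem_forall_abs_lt_one_or_eq [Fintype ι] {F : Set (EuclideanSpace ℝ ι)}
    (hF : Convex ℝ F) (hFc : F ⊆ cube ι) (hne : F.Nonempty) :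
    ∃ z ∈ F, ∀ i, |z i| < 1 ∨ ∀ x ∈ F, x i = z i := by
  classical
  suffices ∀ T : Finset ι, ∃ z ∈ F, ∀ i ∈ T, |z i| < 1 ∨ ∀ x ∈ F, x i = z i by
    simpa using this Finset.univ
  intro T
  induction T using Finset.induction_on with
  | empty => exact ⟨hne.some, hne.some_mem, by simp⟩
  | insert a T _ ih =>
    obtain ⟨z, hzF, hz⟩ := ih
    by_cases hza : |z a| < 1 ∨ ∀ x ∈ F, x a = z a
    · exact ⟨z, hzF, (Finset.forall_mem_insert _ _ _).2 ⟨hza, hz⟩⟩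
    push Not at hza
    obtain ⟨-, x, hxF, hxa⟩ := hza
    have hmF : midpoint ℝ z x ∈ F := hF.midpoint_mem hzF hxF
    refine ⟨midpoint ℝ z x, hmF, (Finset.forall_mem_insert _ _ _).2 ⟨Or.inl ?_, fun i hi => ?_⟩⟩
    · rw [EuclideanSpace.midpoint_apply]
      exact abs_midpoint_lt_one (hFc hzF a) (hFc hxF a) (Or.inr hxa.symm)
    · rcases hz i hi with h | h
      · rw [EuclideanSpace.midpoint_apply]
        exact Or.inl (abs_midpoint_lt_one (hFc hzF i) (hFc hxF i) (Or.inl h))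
      · exact Or.inr fun y hy => (h y hy).trans (h _ hmF).symm

noncomputable def coordRestrict (S : Finset ι) : EuclideanSpace ℝ ι →ₗ[ℝ] (S → ℝ) :=
  LinearMap.pi fun i : S =>
    (EuclideanSpace.proj (𝕜 := ℝ) (i : ι)).toLinearMap

theorem mem_ker_coordRestrict {S : Finset ι} {w : EuclideanSpace ℝ ι} :
    w ∈ LinearMap.ker (coordRestrict S) ↔ ∀ i ∈ S, w i = 0 := by
  simp [coordRestrict, funext_iff]

theorem inf_ker_coordRestrict_le_direction [Finite ι] {L : Submodule ℝ (EuclideanSpace ℝ ι)}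
    {F : Set (EuclideanSpace ℝ ι)} (hF : IsExtreme ℝ (cube ι ∩ L) F) {z : EuclideanSpace ℝ ι}
    (hzF : z ∈ F) {S : Finset ι} (hz : ∀ i ∉ S, |z i| < 1) :
    L ⊓ LinearMap.ker (coordRestrict S) ≤ (affineSpan ℝ F).direction := by
  rintro w ⟨hwL, hwS⟩
  have hzP := hF.subset hzF
  have hzw : ∀ i, |z i| < 1 ∨ w i = 0 := fun i => by
    by_cases hi : i ∈ S
    · exact Or.inr (mem_ker_coordRestrict.1 hwS i hi)
    · exact Or.inl (hz i hi)
  have hcube := eventually_add_smul_mem_cube hzP.1 hzw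
  have hcube' := (continuous_neg.tendsto' (0 : ℝ) 0 neg_zero).eventually hcube
  obtain ⟨t, ⟨hpos, hneg⟩, ht⟩ : ∃ t : ℝ, (z + t • w ∈ cube ι ∧ z + (-t) • w ∈ cube ι) ∧ 0 < t :=
    (((hcube.and hcube').filter_mono nhdsWithin_le_nhds).and
      (self_mem_nhdsWithin (s := Ioi 0))).exists
  have hzwL (s : ℝ) : z + s • w ∈ L := L.add_mem hzP.2 (L.smul_mem s hwL)
  rw [neg_smul, ← sub_eq_add_neg] at hneg
  have hF' : z + t • w ∈ F := hF.left_mem_of_mem_openSegment ⟨hpos, hzwL t⟩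
    ⟨hneg, by simpa [sub_eq_add_neg] using hzwL (-t)⟩ hzF (mem_openSegment_add_sub z (t • w))
  have htw := AffineSubspace.vsub_mem_direction (subset_affineSpan ℝ F hF')
    (subset_affineSpan ℝ F hzF)
  rw [vsub_eq_sub, add_sub_cancel_left] at htw
  exact (Submodule.smul_mem_iff _ ht.ne').1 htw

end Cube

theorem cube_section_face_distance (N n : ℕ)
    (L : Submodule ℝ (EuclideanSpace ℝ (Fin N)))
    (hL : Module.finrank ℝ L = n)
    (P : Set (EuclideanSpace ℝ (Fin N)))
    (hP : P = {x : EuclideanSpace ℝ (Fin N) | ∀ i, |x i| ≤ 1} ∩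
      (L : Set (EuclideanSpace ℝ (Fin N))))
    (F : Set (EuclideanSpace ℝ (Fin N))) (hF : IsExposed ℝ P F) (hFne : F.Nonempty) :
    Real.sqrt (n - Module.finrank ℝ (affineSpan ℝ F).direction) ≤
      Metric.infDist 0 (affineSpan ℝ F : Set (EuclideanSpace ℝ (Fin N))) := by
  change P = cube (Fin N) ∩ L at hP
  subst hP hL
  obtain ⟨z, hzF, hz⟩ :=
    (hF.convex (convex_cube.inter L.convex)).exists_mem_forall_abs_lt_one_or_eq
      (hF.subset.trans inter_subset_left) hFne
  set S := Finset.univ.filter fun i => 1 ≤ |z i|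
  have hfix (x) (hx : x ∈ affineSpan ℝ F) (i) (hi : i ∈ S) : 1 ≤ |x i| := by
    have hzi : 1 ≤ |z i| := (Finset.mem_filter.1 hi).2
    rwa [EuclideanSpace.apply_eq_of_mem_affineSpan ((hz i).resolve_left hzi.not_gt) hx]
  have hdist : √(S.card : ℝ) ≤ infDist 0 (affineSpan ℝ F : Set (EuclideanSpace ℝ (Fin N))) :=
    (le_infDist ⟨z, subset_affineSpan ℝ F hzF⟩).2 fun y hy => by
      rw [dist_zero_left]; exact sqrt_card_le_norm S (hfix y hy)
  have hdim : finrank ℝ L ≤ finrank ℝ (affineSpan ℝ F).direction + S.card := by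
    have hle := inf_ker_coordRestrict_le_direction hF.isExtreme hzF (S := S)
      fun i hi => by simpa [S] using hi
    have hrank := L.finrank_le_finrank_inf_ker_add (coordRestrict S)
    rw [finrank_fintype_fun_eq_card, Fintype.card_coe] at hrank
    exact hrank.trans (Nat.add_le_add_right (Submodule.finrank_mono hle) _)
  calc √((finrank ℝ L : ℝ) - finrank ℝ (affineSpan ℝ F).direction) ≤ √(S.card : ℝ) := by
        gcongr; rw [sub_le_iff_le_add']; exact_mod_cast hdim
    _ ≤ _ := hdist
end

section
/- Fix q > 0. For t ∈ (0, π/2), let T(t) = {(x,y) ∈ R² : x ≥ 0, y ≥ 0, x/tan(t) + y/q ≤ 1} and define area(t) = ∫_{T(t)} (1 + x² + y²)^{-3/2} dx dy. Then area(t)/sin(t) is strictly increasing in t on (0, π/2). -/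
/-!
In the gnomonic chart the triangle has legs `T = tan t` and `q`. Integrating first in `y`
(antiderivative `y / ((1 + x²) √(1 + x² + y²))`), then in `x` (antiderivative
`arctan ((q x + u) / √(1 + x² + (q - u x)²))` with `u = q / T`) gives the area
`arctan (q T / (√(1 + T²) + √(1 + q²))) = arctan (q sin t / (1 + w cos t))`, `w = √(1 + q²)`.
For `A = arctan g` with this `g`, `(A / sin)'` has the sign of `A' sin t - A cos t`, and the
bound `A ≤ g` reduces its positivity to the algebraic inequality `g cos t < A' sin t`, which
holds because `q ≤ w`.
-/

open MeasureTheory Real Set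

theorem setIntegral_prod_eq_integral_setIntegral_preimage {α β E : Type*} [MeasurableSpace α]
    [MeasurableSpace β] [NormedAddCommGroup E] [NormedSpace ℝ E] {μ : Measure α} {ν : Measure β}
    [SFinite μ] [SFinite ν] {s : Set (α × β)} (hs : MeasurableSet s) {f : α × β → E}
    (hf : IntegrableOn f s (μ.prod ν)) :
    ∫ z in s, f z ∂μ.prod ν = ∫ x, ∫ y in Prod.mk x ⁻¹' s, f (x, y) ∂ν ∂μ := by
  rw [← integral_indicator hs, integral_prod _ (hf.integrable_indicator hs)]
  congr 1 with x
  rw [← integral_indicator (measurable_prodMk_left hs)]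
  rfl

theorem div_add_div_le_one_iff {T q x y : ℝ} (hq : 0 < q) :
    x / T + y / q ≤ 1 ↔ y ≤ q - q / T * x := by
  rw [← le_sub_iff_add_le', div_le_iff₀ hq, show (1 - x / T) * q = q - q / T * x by ring]

theorem setIntegral_triangle_eq_intervalIntegral {T q : ℝ} (hT : 0 < T) (hq : 0 < q)
    {f : ℝ × ℝ → ℝ} (hf : Continuous f) :
    ∫ p in {p : ℝ × ℝ | 0 ≤ p.1 ∧ 0 ≤ p.2 ∧ p.1 / T + p.2 / q ≤ 1}, f p =
      ∫ x in (0 : ℝ)..T, ∫ y in (0 : ℝ)..(q - q / T * x), f (x, y) := by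
  set S := {p : ℝ × ℝ | 0 ≤ p.1 ∧ 0 ≤ p.2 ∧ p.1 / T + p.2 / q ≤ 1}
  have hS : MeasurableSet S := by measurability
  have hsection : ∀ x, Prod.mk x ⁻¹' S = if 0 ≤ x then Icc 0 (q - q / T * x) else ∅ := by
    intro x
    ext y
    split_ifs with hx <;> simp [S, hx, div_add_div_le_one_iff hq]
  have hbound : ∀ x, 0 ≤ q - q / T * x ↔ x ≤ T := fun x => by
    rw [sub_nonneg, div_mul_eq_mul_div, div_le_iff₀ hT, mul_le_mul_iff_right₀ hq]
  have hSsub : S ⊆ Icc (0, 0) (T, q) := by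
    rintro ⟨x, y⟩ ⟨hx, hy, hxy⟩
    rw [div_add_div_le_one_iff hq] at hxy
    exact ⟨⟨hx, hy⟩, (hbound x).1 (hy.trans hxy), by nlinarith [div_pos hq hT]⟩
  calc ∫ p in S, f p = ∫ x, ∫ y in Prod.mk x ⁻¹' S, f (x, y) := by
        rw [Measure.volume_eq_prod]
        exact setIntegral_prod_eq_integral_setIntegral_preimage hS
          ((hf.integrableOn_Icc).mono_set hSsub)
    _ = ∫ x in Icc 0 T, ∫ y in Prod.mk x ⁻¹' S, f (x, y) := by
        refine (setIntegral_eq_integral_of_forall_compl_eq_zero fun x hx => ?_).symm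
        have hempty : Prod.mk x ⁻¹' S = ∅ := by
          rw [hsection]
          split_ifs with hx0
          · exact Icc_eq_empty fun h => hx ⟨hx0, (hbound x).1 h⟩
          · rfl
        rw [hempty, Measure.restrict_empty, integral_zero_measure]
    _ = ∫ x in Icc 0 T, ∫ y in (0 : ℝ)..(q - q / T * x), f (x, y) := by
        refine setIntegral_congr_fun measurableSet_Icc fun x hx => ?_
        rw [hsection, if_pos hx.1, integral_Icc_eq_integral_Ioc,
          intervalIntegral.integral_of_le ((hbound x).2 hx.2)]
    _ = ∫ x in (0 : ℝ)..T, ∫ y in (0 : ℝ)..(q - q / T * x), f (x, y) := by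
        rw [intervalIntegral.integral_of_le hT.le, integral_Icc_eq_integral_Ioc]

theorem rpow_neg_three_halves {a : ℝ} (ha : 0 < a) : a ^ (-(3 / 2 : ℝ)) = (a * √a)⁻¹ := by
  rw [rpow_neg ha.le, show (3 / 2 : ℝ) = 1 + 1 / 2 by norm_num, rpow_add ha, rpow_one,
    ← sqrt_eq_rpow]

theorem hasDerivAt_div_mul_sqrt_add_sq {a : ℝ} (ha : 0 < a) (y : ℝ) :
    HasDerivAt (fun y => y / (a * √(a + y ^ 2))) ((a + y ^ 2) ^ (-(3 / 2 : ℝ))) y := by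
  have hpos : 0 < a + y ^ 2 := by positivity
  have h := (hasDerivAt_id' y).div
    ((((hasDerivAt_pow 2 y).const_add a).sqrt hpos.ne').const_mul a) (by positivity)
  refine h.congr_deriv ?_
  rw [rpow_neg_three_halves hpos]
  have hs := sq_sqrt hpos.le
  field_simp
  linear_combination (2 * y ^ 2) * hs

theorem integral_add_sq_rpow_neg_three_halves {a : ℝ} (ha : 0 < a) (b : ℝ) :
    ∫ y in (0 : ℝ)..b, (a + y ^ 2) ^ (-(3 / 2 : ℝ)) = b / (a * √(a + b ^ 2)) := by
  rw [intervalIntegral.integral_eq_sub_of_hasDerivAt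
    (fun y _ => hasDerivAt_div_mul_sqrt_add_sq ha y)]
  · simp
  · exact (Continuous.rpow_const (by fun_prop) fun y => Or.inl (by positivity)).intervalIntegrable
      _ _

theorem arctan_sub_arctan {x y : ℝ} (h : -1 < x * y) :
    arctan x - arctan y = arctan ((x - y) / (1 + x * y)) := by
  rw [sub_eq_add_neg, ← arctan_neg, arctan_add (by linarith)]
  ring_nf

theorem hasDerivAt_arctan_div_sqrt (q u x : ℝ) :
    HasDerivAt (fun x => arctan ((q * x + u) / √(1 + x ^ 2 + (q - u * x) ^ 2)))
      ((q - u * x) / ((1 + x ^ 2) * √(1 + x ^ 2 + (q - u * x) ^ 2))) x := by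
  have hpos : 0 < 1 + x ^ 2 + (q - u * x) ^ 2 := by positivity
  have hQ : HasDerivAt (fun x => 1 + x ^ 2 + (q - u * x) ^ 2) (2 * x - 2 * u * (q - u * x)) x := by
    refine (((hasDerivAt_pow 2 x).const_add 1).fun_add
      ((((hasDerivAt_id' x).const_mul u).const_sub q).fun_pow 2)).congr_deriv ?_
    push_cast
    ring
  have h := ((((hasDerivAt_id' x).const_mul q).add_const u).fun_div (hQ.sqrt hpos.ne')
    (by positivity)).arctan
  refine h.congr_deriv ?_
  set s := √(1 + x ^ 2 + (q - u * x) ^ 2)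
  have hs : s ^ 2 = 1 + x ^ 2 + (q - u * x) ^ 2 := sq_sqrt hpos.le
  have hs0 : 0 < s := sqrt_pos.2 hpos
  field_simp
  linear_combination (q * x ^ 2 + x * u) * hs

theorem integral_div_mul_sqrt_eq_arctan {T q : ℝ} (hT : 0 < T) (hq : 0 < q) :
    ∫ x in (0 : ℝ)..T, (q - q / T * x) / ((1 + x ^ 2) * √(1 + x ^ 2 + (q - q / T * x) ^ 2)) =
      arctan (q * T / (√(1 + T ^ 2) + √(1 + q ^ 2))) := by
  rw [intervalIntegral.integral_eq_sub_of_hasDerivAt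
    (fun x _ => hasDerivAt_arctan_div_sqrt q (q / T) x)
    ((Continuous.div (by fun_prop) (by fun_prop) fun x => by positivity).intervalIntegrable _ _)]
  have ha := sq_sqrt (by positivity : (0 : ℝ) ≤ 1 + T ^ 2)
  have hw := sq_sqrt (by positivity : (0 : ℝ) ≤ 1 + q ^ 2)
  have ha0 : 0 < √(1 + T ^ 2) := by positivity
  have hw0 : 0 < √(1 + q ^ 2) := by positivity
  rw [div_mul_cancel₀ q hT.ne', sub_self]
  simp only [mul_zero, zero_add, add_zero, sub_zero, ne_eq, OfNat.ofNat_ne_zero,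
    not_false_eq_true, zero_pow]
  rw [arctan_sub_arctan (neg_one_lt_zero.trans (by positivity))]
  congr 1
  field_simp
  linear_combination (T ^ 2 + 1) * hw - ha

theorem setIntegral_triangle_rpow_neg_three_halves {T q : ℝ} (hT : 0 < T) (hq : 0 < q) :
    ∫ p in {p : ℝ × ℝ | 0 ≤ p.1 ∧ 0 ≤ p.2 ∧ p.1 / T + p.2 / q ≤ 1},
        (1 + p.1 ^ 2 + p.2 ^ 2) ^ (-(3 / 2 : ℝ)) =
      arctan (q * T / (√(1 + T ^ 2) + √(1 + q ^ 2))) := by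
  rw [setIntegral_triangle_eq_intervalIntegral hT hq
      (Continuous.rpow_const (by fun_prop) fun p => Or.inl (by positivity)),
    ← integral_div_mul_sqrt_eq_arctan hT hq]
  exact intervalIntegral.integral_congr fun x _ =>
    integral_add_sq_rpow_neg_three_halves (a := 1 + x ^ 2) (by positivity) _

theorem mul_tan_div_sqrt_one_add_tan_sq_add {t : ℝ} (ht : 0 < cos t) (q w : ℝ) :
    q * tan t / (√(1 + tan t ^ 2) + w) = q * sin t / (1 + w * cos t) := by
  rw [← inv_inv √(1 + tan t ^ 2), inv_sqrt_one_add_tan_sq ht, tan_eq_sin_div_cos]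
  field_simp

theorem arctan_le_self {x : ℝ} (hx : 0 ≤ x) : arctan x ≤ x := by
  simpa using le_tan (arctan_nonneg.2 hx) (arctan_lt_pi_div_two x)

theorem hasDerivAt_mul_sin_div_one_add_mul_cos (q w t : ℝ) (h : 1 + w * cos t ≠ 0) :
    HasDerivAt (fun t => q * sin t / (1 + w * cos t))
      (q * (w + cos t) / (1 + w * cos t) ^ 2) t := by
  refine (((hasDerivAt_sin t).const_mul q).fun_div ((hasDerivAt_cos t).const_mul w |>.const_add 1)
    h).congr_deriv ?_
  field_simp
  congr 2
  linear_combination w * sin_sq_add_cos_sq t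

theorem strictMonoOn_div_sin {A A' : ℝ → ℝ}
    (hA : ∀ t ∈ Ioo 0 (π / 2), HasDerivAt A (A' t) t)
    (hlt : ∀ t ∈ Ioo 0 (π / 2), A t * cos t < A' t * sin t) :
    StrictMonoOn (fun t => A t / sin t) (Ioo 0 (π / 2)) := by
  have hsin : ∀ t ∈ Ioo 0 (π / 2), 0 < sin t := fun t ht =>
    sin_pos_of_pos_of_lt_pi ht.1 (by linarith [ht.2, pi_pos])
  have hderiv : ∀ t ∈ Ioo 0 (π / 2),
      HasDerivAt (fun t => A t / sin t) ((A' t * sin t - A t * cos t) / sin t ^ 2) t :=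
    fun t ht => (hA t ht).div (hasDerivAt_sin t) (hsin t ht).ne'
  refine strictMonoOn_of_deriv_pos (convex_Ioo 0 (π / 2))
    (fun t ht => (hderiv t ht).continuousAt.continuousWithinAt) fun t ht => ?_
  rw [interior_Ioo] at ht
  rw [(hderiv t ht).deriv]
  exact div_pos (sub_pos.2 (hlt t ht)) (pow_pos (hsin t ht) 2)

theorem mul_sin_div_one_add_mul_cos_mul_cos_lt {q w t : ℝ} (hq : 0 < q) (hqw : q ≤ w)
    (hs : 0 < sin t) (hc : 0 < cos t) :
    q * sin t / (1 + w * cos t) * cos t <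
      1 / (1 + (q * sin t / (1 + w * cos t)) ^ 2) * (q * (w + cos t) / (1 + w * cos t) ^ 2) *
        sin t := by
  have hw : 0 < w := hq.trans_le hqw
  have hwq : 0 ≤ w ^ 2 - q ^ 2 := by nlinarith
  rw [← sub_pos]
  have hdiff : 1 / (1 + (q * sin t / (1 + w * cos t)) ^ 2) * (q * (w + cos t) / (1 + w * cos t) ^ 2)
        * sin t - q * sin t / (1 + w * cos t) * cos t
      = q * sin t ^ 3 * (w + cos t * (w ^ 2 - q ^ 2)) /
        ((1 + w * cos t) * ((1 + w * cos t) ^ 2 + (q * sin t) ^ 2)) := by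
    field_simp
    linear_combination (-(w + w ^ 2 * cos t)) * sin_sq_add_cos_sq t
  rw [hdiff]
  positivity

theorem strictMonoOn_arctan_mul_sin_div_div_sin {q w : ℝ} (hq : 0 < q) (hqw : q ≤ w) :
    StrictMonoOn (fun t => arctan (q * sin t / (1 + w * cos t)) / sin t) (Ioo 0 (π / 2)) := by
  have hw : 0 < w := hq.trans_le hqw
  have hsc : ∀ t ∈ Ioo 0 (π / 2), 0 < sin t ∧ 0 < cos t := fun t ht =>
    ⟨sin_pos_of_pos_of_lt_pi ht.1 (by linarith [ht.2, pi_pos]),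
      cos_pos_of_mem_Ioo ⟨by linarith [ht.1, pi_pos], ht.2⟩⟩
  refine strictMonoOn_div_sin (fun t ht => (hasDerivAt_mul_sin_div_one_add_mul_cos q w t
    (by have := (hsc t ht).2; positivity)).arctan) fun t ht => ?_
  obtain ⟨hs, hc⟩ := hsc t ht
  calc arctan (q * sin t / (1 + w * cos t)) * cos t
        ≤ q * sin t / (1 + w * cos t) * cos t := by
          gcongr
          exact arctan_le_self (by positivity)
      _ < _ := mul_sin_div_one_add_mul_cos_mul_cos_lt hq hqw hs hc

theorem spherical_triangle_area_div_sin_strictMono (q : ℝ) (hq : 0 < q) :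
    StrictMonoOn (fun t : ℝ =>
      (∫ p in {p : ℝ × ℝ | 0 ≤ p.1 ∧ 0 ≤ p.2 ∧ p.1 / Real.tan t + p.2 / q ≤ 1},
        (1 + p.1 ^ 2 + p.2 ^ 2) ^ (-(3 / 2 : ℝ))) / Real.sin t)
      (Set.Ioo 0 (Real.pi / 2)) := by
  have hqw : q ≤ √(1 + q ^ 2) := (le_sqrt' hq).2 (by linarith)
  refine (strictMonoOn_arctan_mul_sin_div_div_sin hq hqw).congr fun t ht => ?_
  have hcos : 0 < cos t := cos_pos_of_mem_Ioo ⟨by linarith [ht.1, pi_pos], ht.2⟩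
  dsimp only
  rw [setIntegral_triangle_rpow_neg_three_halves (tan_pos_of_pos_of_lt_pi_div_two ht.1 ht.2) hq,
    mul_tan_div_sqrt_one_add_tan_sq_add hcos]
end
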